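/- arXiv:1109.1548 — 9 statements merged into one kernel-verified Lean document; each statement's English description precedes it below -/
import Mathlib

section
/- Let J be a Lie-orthogonal operator on a Lie algebra L and let x ∈ L be such that Jᵏx = 0 for some k ≥ 0. Then x belongs to the center of L. In particular, the generalized eigenspace of J for eigenvalue 0 is contained in the center of L. -/
theorem genEigenspace_zero_subset_center {k L : Type*} [Field k] [LieRing L] [LieAlgebra k L]
    [FiniteDimensional k L]
    (J : L →ₗ[k] L) (hJ : ∀ x y : L, ⁅J x, J y⁆ = ⁅x, y⁆)
    (x : L) (n : ℕ) (hx : (J ^ n) x = 0) :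
    x ∈ LieAlgebra.center k L := by
  have key : ∀ m : ℕ, ∀ y z : L, ⁅(J ^ m) y, (J ^ m) z⁆ = ⁅y, z⁆ := by
    intro m
    induction m with
    | zero => intro y z; simp
    | succ m ih =>
      intro y z
      rw [show (J ^ (m + 1)) y = (J ^ m) (J y) by rw [pow_succ, Module.End.mul_apply],
        show (J ^ (m + 1)) z = (J ^ m) (J z) by rw [pow_succ, Module.End.mul_apply],
        ih (J y) (J z), hJ]
  rw [LieAlgebra.center, LieModule.mem_maxTrivSubmodule]
  intro y
  calc ⁅y, x⁆ = ⁅(J ^ n) y, (J ^ n) x⁆ := (key n y x).symm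
    _ = 0 := by rw [hx]; simp
end

section
/- Any Lie-orthogonal operator on a finite-dimensional Lie algebra with zero center is injective (and hence invertible). -/
theorem lieOrthogonal_injective_of_centerless {k L : Type*} [Field k] [LieRing L] [LieAlgebra k L]
    [FiniteDimensional k L] (hZ : LieAlgebra.center k L = ⊥)
    (J : L →ₗ[k] L) (hJ : ∀ x y : L, ⁅J x, J y⁆ = ⁅x, y⁆) :
    Function.Injective J := by
  rw [← LinearMap.ker_eq_bot, eq_bot_iff]
  intro x hx
  have hx0 : J x = 0 := hx
  have hc : x ∈ LieAlgebra.center k L := by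
    intro y
    have := hJ y x
    rw [hx0, lie_zero] at this
    exact this.symm
  rw [hZ] at hc
  exact hc
end

section
/- If J is a Lie-orthogonal operator on a finite-dimensional Lie algebra L, then J maps the center of L into itself. -/
theorem lieOrthogonal_maps_center {k L : Type*} [Field k] [LieRing L] [LieAlgebra k L]
    [FiniteDimensional k L]
    (J : L →ₗ[k] L) (hJ : ∀ x y : L, ⁅J x, J y⁆ = ⁅x, y⁆) :
    ∀ x ∈ LieAlgebra.center k L, J x ∈ LieAlgebra.center k L := by
  -- Step 1: kernels of powers of J lie in the center.
  have hker : ∀ n : ℕ, ∀ z : L, (J ^ n) z = 0 → z ∈ LieAlgebra.center k L := by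
    intro n
    induction n with
    | zero =>
      intro z hz
      simp only [pow_zero, Module.End.one_apply] at hz
      subst hz
      simp [LieModule.mem_maxTrivSubmodule]
    | succ n ih =>
      intro z hz
      have hJz : J z ∈ LieAlgebra.center k L := by
        apply ih
        rw [pow_succ] at hz
        simpa using hz
      rw [LieModule.mem_maxTrivSubmodule] at hJz ⊢
      intro y
      have : ⁅J y, J z⁆ = ⁅y, z⁆ := hJ y z
      rw [hJz (J y)] at this
      exact this.symm
  -- Step 2: Fitting decomposition.
  obtain ⟨N, hN⟩ := Filter.eventually_atTop.mp (J.eventually_isCompl_ker_pow_range_pow)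
  have hc : Codisjoint (LinearMap.ker (J ^ (N + 1))) (LinearMap.range (J ^ (N + 1))) :=
    (hN (N + 1) (Nat.le_succ N)).codisjoint
  intro x hx
  rw [LieModule.mem_maxTrivSubmodule] at hx ⊢
  intro y
  have hy : y ∈ LinearMap.ker (J ^ (N + 1)) ⊔ LinearMap.range (J ^ (N + 1)) := by
    rw [hc.eq_top]; trivial
  obtain ⟨a, ha, b, hb, rfl⟩ := Submodule.mem_sup.mp hy
  obtain ⟨u, rfl⟩ := hb
  have ha' : a ∈ LieAlgebra.center k L := hker (N + 1) a (LinearMap.mem_ker.mp ha)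
  rw [LieModule.mem_maxTrivSubmodule] at ha'
  have h1 : ⁅a, J x⁆ = 0 := by
    rw [← lie_skew, ha' (J x), neg_zero]
  have h2 : ⁅(J ^ (N + 1)) u, J x⁆ = 0 := by
    have : (J ^ (N + 1)) u = J ((J ^ N) u) := by
      rw [pow_succ']; simp
    rw [this, hJ ((J ^ N) u) x, hx ((J ^ N) u)]
  rw [add_lie, h1, h2, add_zero]
end

section
/- If J₁, J₂ are Lie-orthogonal operators on a finite-dimensional Lie algebra L, and J̃₁, J̃₂ are Lie-orthogonal operators with (J̃ᵢ − Jᵢ)(L) contained in the center Z of L for i = 1, 2, then (J̃₁J̃₂ − J₁J₂)(L) ⊆ Z. That is, composition of Lie-orthogonal operators is well-defined on equivalence classes modulo center-valued differences. -/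
lemma lieOrth_maps_center {k L : Type*} [Field k] [LieRing L] [LieAlgebra k L]
    [FiniteDimensional k L] (J : L →ₗ[k] L) (h : ∀ x y : L, ⁅J x, J y⁆ = ⁅x, y⁆)
    {z : L} (hz : z ∈ LieAlgebra.center k L) : J z ∈ LieAlgebra.center k L := by
  have hpow : ∀ n : ℕ, ∀ x y : L, ⁅(J ^ n) x, (J ^ n) y⁆ = ⁅x, y⁆ := by
    intro n
    induction n with
    | zero => simp
    | succ m ih =>
      intro x y
      have : (J ^ (m + 1)) = J ∘ₗ (J ^ m) := by rw [pow_succ']; rfl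
      rw [this]
      simp only [LinearMap.comp_apply]
      rw [h, ih]
  obtain ⟨n, hn⟩ := Filter.eventually_atTop.mp (J.eventually_codisjoint_ker_pow_range_pow)
  have hcd := hn (n + 1) (by omega)
  rw [codisjoint_iff, Submodule.eq_top_iff'] at hcd
  rw [LieModule.mem_maxTrivSubmodule k L L] at hz ⊢
  intro w
  obtain ⟨a, ha, b, hb, rfl⟩ := Submodule.mem_sup.mp (hcd w)
  have ha' : a ∈ LieAlgebra.center k L := by
    rw [LieModule.mem_maxTrivSubmodule k L L]
    intro y
    have := hpow (n + 1) a y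
    rw [LinearMap.mem_ker.mp ha] at this
    simp only [zero_lie] at this
    rw [← lie_skew, ← this, neg_zero]
  obtain ⟨c, rfl⟩ := LinearMap.mem_range.mp hb
  have hb' : ⁅J z, (J ^ (n + 1)) c⁆ = 0 := by
    have : (J ^ (n + 1)) = J ∘ₗ (J ^ n) := by rw [pow_succ']; rfl
    rw [this]
    simp only [LinearMap.comp_apply]
    rw [h, ← lie_skew, hz _, neg_zero]
  rw [LieModule.mem_maxTrivSubmodule k L L] at ha'
  rw [add_lie, ← lie_skew a (J z), ha' _, neg_zero, ← lie_skew, hb', neg_zero, zero_add]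

theorem comp_welldefined_mod_center {k L : Type*} [Field k] [LieRing L] [LieAlgebra k L]
    [FiniteDimensional k L]
    (J₁ J₂ J₁' J₂' : L →ₗ[k] L)
    (h₁ : ∀ x y : L, ⁅J₁ x, J₁ y⁆ = ⁅x, y⁆) (h₂ : ∀ x y : L, ⁅J₂ x, J₂ y⁆ = ⁅x, y⁆)
    (h₁' : ∀ x y : L, ⁅J₁' x, J₁' y⁆ = ⁅x, y⁆) (h₂' : ∀ x y : L, ⁅J₂' x, J₂' y⁆ = ⁅x, y⁆)
    (e₁ : ∀ x : L, (J₁' - J₁) x ∈ LieAlgebra.center k L)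
    (e₂ : ∀ x : L, (J₂' - J₂) x ∈ LieAlgebra.center k L) :
    ∀ x : L, (J₁'.comp J₂' - J₁.comp J₂) x ∈ LieAlgebra.center k L := by
  intro x
  have key : (J₁'.comp J₂' - J₁.comp J₂) x
      = (J₁' - J₁) (J₂' x) + J₁ ((J₂' - J₂) x) := by
    simp only [LinearMap.sub_apply, LinearMap.comp_apply, map_sub]
    abel
  rw [key]
  exact Submodule.add_mem _ (e₁ _) (lieOrth_maps_center J₁ h₁ (e₂ x))
end

section
/- Let J be a Lie-orthogonal operator on a finite-dimensional Lie algebra L over a field of characteristic zero. Then J maps the radical (maximal solvable ideal) of L into itself. -/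
/-!
Iterating `⁅J x, J y⁆ = ⁅x, y⁆` shows that `ker Jⁿ` is central, and by Fitting's lemma
`L = ker Jⁿ + range Jⁿ` for large `n`, so `L = center + range J`. Hence for `x` in an ideal `I`,
`⁅c + J y, J x⁆ = ⁅y, x⁆ ∈ I`: `J` maps `I` into its normalizer. The normalizer of the radical
is an ideal whose derived algebra lies in the radical, so it is solvable and equals the radical.
-/

namespace LieAlgebra

variable {R L : Type*} [CommRing R] [LieRing L] [LieAlgebra R L]

theorem isSolvable_of_lie_self_le {I J : LieIdeal R L} [IsSolvable I] (h : ⁅J, J⁆ ≤ I) :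
    IsSolvable J := by
  obtain ⟨m, hm⟩ := IsSolvable.solvable (R := R) (L := I)
  rw [LieIdeal.derivedSeries_eq_bot_iff] at hm
  refine IsSolvable.mk (k := m + 1) ((LieIdeal.derivedSeries_eq_bot_iff J _).mpr ?_)
  refine eq_bot_iff.mpr ?_
  calc derivedSeriesOfIdeal R L (m + 1) J
      = derivedSeriesOfIdeal R L m (derivedSeriesOfIdeal R L 1 J) :=
        derivedSeriesOfIdeal_add J m 1
    _ ≤ derivedSeriesOfIdeal R L m I := derivedSeriesOfIdeal_mono h m
    _ = ⊥ := hm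

theorem normalizer_radical_eq_self [IsNoetherian R L] :
    (radical R L).normalizer = radical R L := by
  refine le_antisymm (le_sSup (isSolvable_of_lie_self_le (I := radical R L) ?_))
    (LieSubmodule.le_normalizer _)
  calc ⁅(radical R L).normalizer, (radical R L).normalizer⁆
      ≤ ⁅(⊤ : LieIdeal R L), (radical R L).normalizer⁆ := LieSubmodule.mono_lie_left _ le_top
    _ ≤ radical R L := (LieSubmodule.top_lie_le_iff_le_normalizer _ _).mpr le_rfl

end LieAlgebra

namespace LinearMap

variable {R L : Type*} [CommRing R] [LieRing L] [LieAlgebra R L]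

def IsLieOrthogonal (J : L →ₗ[R] L) : Prop :=
  ∀ x y : L, ⁅J x, J y⁆ = ⁅x, y⁆

namespace IsLieOrthogonal

variable {J : L →ₗ[R] L}

theorem pow (hJ : J.IsLieOrthogonal) (n : ℕ) : (J ^ n).IsLieOrthogonal := by
  induction n with
  | zero => simp [IsLieOrthogonal]
  | succ n ih =>
    intro x y
    rw [pow_succ', Module.End.mul_apply, Module.End.mul_apply, hJ, ih]

theorem ker_le_center (hJ : J.IsLieOrthogonal) :
    ker J ≤ (LieAlgebra.center R L).toSubmodule := by
  intro z hz
  rw [LieSubmodule.mem_toSubmodule, LieModule.mem_maxTrivSubmodule]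
  intro y
  rw [← hJ, mem_ker.mp hz, lie_zero]

theorem center_sup_range_eq_top [IsArtinian R L] (hJ : J.IsLieOrthogonal) :
    (LieAlgebra.center R L).toSubmodule ⊔ range J = ⊤ := by
  obtain ⟨n, hn⟩ := Filter.eventually_atTop.mp J.eventually_codisjoint_ker_pow_range_pow
  have hrange : range (J ^ (n + 1)) ≤ range J := by
    rw [pow_succ', Module.End.mul_eq_comp]
    exact range_comp_le_range _ _
  exact codisjoint_iff.mp <|
    (hn (n + 1) n.le_succ).mono ((hJ.pow (n + 1)).ker_le_center) hrange

theorem apply_mem_normalizer [IsArtinian R L] (hJ : J.IsLieOrthogonal) {I : LieIdeal R L}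
    {x : L} (hx : x ∈ I) : J x ∈ I.normalizer := by
  rw [LieSubmodule.mem_normalizer]
  intro z
  have hz : z ∈ (LieAlgebra.center R L).toSubmodule ⊔ range J := by
    rw [hJ.center_sup_range_eq_top]; trivial
  obtain ⟨c, hc_center, _, ⟨y, rfl⟩, rfl⟩ := Submodule.mem_sup.mp hz
  have hc : ⁅c, J x⁆ = 0 := by
    rw [← lie_skew, (LieModule.mem_maxTrivSubmodule R L L c).mp hc_center, neg_zero]
  rw [add_lie, hc, zero_add, hJ]
  exact I.lie_mem hx

end IsLieOrthogonal

end LinearMap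

theorem lieOrthogonal_maps_radical_general {k L : Type*} [Field k]
    [LieRing L] [LieAlgebra k L] [FiniteDimensional k L]
    (J : L →ₗ[k] L) (hJ : ∀ x y : L, ⁅J x, J y⁆ = ⁅x, y⁆) :
    ∀ x ∈ LieAlgebra.radical k L, J x ∈ LieAlgebra.radical k L := by
  intro x hx
  rw [← LieAlgebra.normalizer_radical_eq_self]
  exact LinearMap.IsLieOrthogonal.apply_mem_normalizer hJ hx

theorem lieOrthogonal_maps_radical {k L : Type*} [Field k] [CharZero k]
    [LieRing L] [LieAlgebra k L] [FiniteDimensional k L]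
    (J : L →ₗ[k] L) (hJ : ∀ x y : L, ⁅J x, J y⁆ = ⁅x, y⁆) :
    ∀ x ∈ LieAlgebra.radical k L, J x ∈ LieAlgebra.radical k L :=
  lieOrthogonal_maps_radical_general J hJ
end

section
/- Let I be an ideal of a finite-dimensional Lie algebra L such that the quotient L/I has trivial center. Then I is invariant under every Lie-orthogonal operator on L. -/
theorem lieOrthogonal_invariant_ideal_of_quot_centerless {k L : Type*} [Field k]
    [LieRing L] [LieAlgebra k L] [FiniteDimensional k L]
    (I : LieIdeal k L) (hI : LieAlgebra.center k (L ⧸ I) = ⊥)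
    (J : L →ₗ[k] L) (hJ : ∀ x y : L, ⁅J x, J y⁆ = ⁅x, y⁆) :
    ∀ x ∈ I, J x ∈ I := by
  intro x hx
  -- powers of `J` are Lie-orthogonal
  have hpow : ∀ (n : ℕ) (a b : L), ⁅(J ^ n) a, (J ^ n) b⁆ = ⁅a, b⁆ := by
    intro n
    induction n with
    | zero => intro a b; simp
    | succ m ih =>
      intro a b
      have h1 : (J ^ (m + 1)) a = (J ^ m) (J a) := by
        rw [pow_succ, Module.End.mul_apply]
      have h2 : (J ^ (m + 1)) b = (J ^ m) (J b) := by
        rw [pow_succ, Module.End.mul_apply]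
      rw [h1, h2, ih (J a) (J b), hJ]
  -- choose `N ≥ 1` with codisjoint kernel and range of `J ^ N`
  obtain ⟨M, hM⟩ := Filter.eventually_atTop.mp J.eventually_codisjoint_ker_pow_range_pow
  set N : ℕ := M + 1 with hNdef
  have hcod : Codisjoint (LinearMap.ker (J ^ N)) (LinearMap.range (J ^ N)) :=
    hM N (Nat.le_succ M)
  -- anything in the kernel of `J ^ N` is central, hence lies in `I`
  have hker : ∀ u : L, (J ^ N) u = 0 → u ∈ I := by
    intro u hu
    have hcen : ∀ w : L, ⁅w, u⁆ = 0 := by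
      intro w
      have := hpow N u w
      rw [hu] at this
      simp only [zero_lie] at this
      rw [← lie_skew, ← this, neg_zero]
    have hmem : (LieSubmodule.Quotient.mk' I) u ∈ LieAlgebra.center k (L ⧸ I) := by
      rw [LieAlgebra.center, LieModule.mem_maxTrivSubmodule]
      intro q
      obtain ⟨w, rfl⟩ := LieSubmodule.Quotient.surjective_mk' I q
      simp only [LieSubmodule.Quotient.mk'_apply]
      rw [← LieSubmodule.Quotient.mk_bracket, hcen w]
      exact LieSubmodule.Quotient.mk_eq_zero'.mpr I.zero_mem
    rw [hI, LieSubmodule.mem_bot] at hmem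
    exact (LieSubmodule.Quotient.mk_eq_zero I).mp hmem
  -- key step : `⁅J x, y⁆ ∈ I` for every `y`
  have key : ∀ y : L, ⁅J x, y⁆ ∈ I := by
    intro y
    have hy : y ∈ LinearMap.ker (J ^ N) ⊔ LinearMap.range (J ^ N) := by
      rw [hcod.eq_top]; trivial
    obtain ⟨u, hu, v, hv, rfl⟩ := Submodule.mem_sup.mp hy
    obtain ⟨w, rfl⟩ := hv
    have huI : u ∈ I := hker u (LinearMap.mem_ker.mp hu)
    rw [lie_add]
    refine I.add_mem ?_ ?_
    · exact lie_mem_right k L I _ _ huI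
    · have h1 : (J ^ N) w = J ((J ^ M) w) := by
        rw [hNdef, pow_succ', Module.End.mul_apply]
      rw [h1, hJ]
      exact lie_mem_left k L I _ _ hx
  -- conclude : the image of `J x` is central in `L ⧸ I`
  have hmem : (LieSubmodule.Quotient.mk' I) (J x) ∈ LieAlgebra.center k (L ⧸ I) := by
    rw [LieAlgebra.center, LieModule.mem_maxTrivSubmodule]
    intro q
    obtain ⟨w, rfl⟩ := LieSubmodule.Quotient.surjective_mk' I q
    have : ⁅w, J x⁆ ∈ I := by
      rw [← neg_neg ⁅w, J x⁆, lie_skew]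
      exact I.neg_mem (key w)
    simp only [LieSubmodule.Quotient.mk'_apply]
    rw [← LieSubmodule.Quotient.mk_bracket]
    exact LieSubmodule.Quotient.mk_eq_zero'.mpr this
  rw [hI, LieSubmodule.mem_bot] at hmem
  exact (LieSubmodule.Quotient.mk_eq_zero I).mp hmem
end

section
/- Every term of the ascending central series of a finite-dimensional Lie algebra L is invariant under any Lie-orthogonal operator on L. -/
/-- Iterating a Lie-orthogonal operator is Lie-orthogonal. -/
lemma lieOrth_pow {k L : Type*} [Field k] [LieRing L] [LieAlgebra k L]
    (J : L →ₗ[k] L) (hJ : ∀ x y : L, ⁅J x, J y⁆ = ⁅x, y⁆) (n : ℕ) :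
    ∀ x y : L, ⁅(J ^ n) x, (J ^ n) y⁆ = ⁅x, y⁆ := by
  induction n with
  | zero => simp
  | succ n ih =>
    intro x y
    rw [pow_succ', Module.End.mul_apply, Module.End.mul_apply, hJ, ih]

/-- Fitting decomposition gives: every element is (central element) + (element of range J). -/
lemma exists_central_add_range {k L : Type*} [Field k] [LieRing L] [LieAlgebra k L]
    [FiniteDimensional k L] (J : L →ₗ[k] L) (hJ : ∀ x y : L, ⁅J x, J y⁆ = ⁅x, y⁆) (y : L) :
    ∃ z w : L, (∀ u : L, ⁅z, u⁆ = 0) ∧ y = z + J w := by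
  have hc := (LinearMap.isCompl_iSup_ker_pow_iInf_range_pow J).codisjoint
  rw [codisjoint_iff, eq_top_iff] at hc
  have hy : y ∈ (⨆ n, LinearMap.ker (J ^ n)) ⊔ (⨅ n, LinearMap.range (J ^ n)) :=
    hc trivial
  obtain ⟨z, hz, v, hv, rfl⟩ := Submodule.mem_sup.mp hy
  obtain ⟨N, hN⟩ := Filter.eventually_atTop.mp J.eventually_iSup_ker_pow_eq
  rw [hN N le_rfl] at hz
  have hv1 : v ∈ LinearMap.range (J ^ 1) := iInf_le (fun n => LinearMap.range (J ^ n)) 1 hv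
  obtain ⟨w, hw⟩ := hv1
  refine ⟨z, w, fun u => ?_, by simp [← hw]⟩
  have := lieOrth_pow J hJ N z u
  rw [LinearMap.mem_ker.mp hz, zero_lie] at this; exact this.symm

theorem lieOrthogonal_invariant_ucs {k L : Type*} [Field k]
    [LieRing L] [LieAlgebra k L] [FiniteDimensional k L]
    (J : L →ₗ[k] L) (hJ : ∀ x y : L, ⁅J x, J y⁆ = ⁅x, y⁆) (n : ℕ) :
    ∀ x ∈ LieSubmodule.ucs n (⊥ : LieIdeal k L), J x ∈ LieSubmodule.ucs n (⊥ : LieIdeal k L) := by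
  cases n with
  | zero =>
    intro x hx
    simp only [LieSubmodule.ucs_zero, LieSubmodule.mem_bot] at hx ⊢
    simp [hx]
  | succ n =>
    intro x hx
    rw [LieSubmodule.ucs_succ, LieSubmodule.mem_normalizer] at hx ⊢
    intro y
    obtain ⟨z, w, hz, rfl⟩ := exists_central_add_range J hJ y
    have : ⁅z + J w, J x⁆ = ⁅w, x⁆ := by
      rw [add_lie, hz, hJ, zero_add]
    rw [this]
    exact hx w
end

section
/- Let J be a Lie-orthogonal operator on a finite-dimensional Lie algebra L over an algebraically closed field of characteristic zero, and let λ, μ be scalars with λμ ≠ 1. If x belongs to the generalized eigenspace of J for λ and y belongs to the generalized eigenspace of J for μ, then [x, y] = 0. -/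
private lemma aux_key {k L : Type*} [Field k]
    [LieRing L] [LieAlgebra k L]
    (J : L →ₗ[k] L) (hJ : ∀ x y : L, ⁅J x, J y⁆ = ⁅x, y⁆)
    (lam mu : k) (hlm : lam * mu ≠ 1) :
    ∀ N n m : ℕ, ∀ x y : L, n + m ≤ N →
      ((J - lam • (1 : L →ₗ[k] L)) ^ n) x = 0 →
      ((J - mu • (1 : L →ₗ[k] L)) ^ m) y = 0 → ⁅x, y⁆ = 0 := by
  intro N
  induction N with
  | zero =>
    intro n m x y h hx hy
    obtain ⟨rfl, rfl⟩ : n = 0 ∧ m = 0 := by omega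
    simp only [pow_zero, Module.End.one_apply] at hx
    simp [hx]
  | succ N ih =>
    intro n m x y h hx hy
    match n, m with
    | 0, m =>
      simp only [pow_zero, Module.End.one_apply] at hx
      simp [hx]
    | n, 0 =>
      simp only [pow_zero, Module.End.one_apply] at hy
      simp [hy]
    | n + 1, m + 1 =>
      set x' := J x - lam • x with hx'def
      set y' := J y - mu • y with hy'def
      have hx' : ((J - lam • (1 : L →ₗ[k] L)) ^ n) x' = 0 := by
        have : ((J - lam • (1 : L →ₗ[k] L)) ^ (n + 1)) x
            = ((J - lam • (1 : L →ₗ[k] L)) ^ n) ((J - lam • (1 : L →ₗ[k] L)) x) := by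
          rw [pow_succ]; rfl
        rw [this] at hx
        simpa [hx'def, LinearMap.sub_apply, LinearMap.smul_apply] using hx
      have hy' : ((J - mu • (1 : L →ₗ[k] L)) ^ m) y' = 0 := by
        have : ((J - mu • (1 : L →ₗ[k] L)) ^ (m + 1)) y
            = ((J - mu • (1 : L →ₗ[k] L)) ^ m) ((J - mu • (1 : L →ₗ[k] L)) y) := by
          rw [pow_succ]; rfl
        rw [this] at hy
        simpa [hy'def, LinearMap.sub_apply, LinearMap.smul_apply] using hy
      have e1 : ⁅x, y'⁆ = 0 := ih (n + 1) m x y' (by omega) hx hy'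
      have e2 : ⁅x', y⁆ = 0 := ih n (m + 1) x' y (by omega) hx' hy
      have e3 : ⁅x', y'⁆ = 0 := ih n m x' y' (by omega) hx' hy'
      have hJx : J x = lam • x + x' := by rw [hx'def]; abel
      have hJy : J y = mu • y + y' := by rw [hy'def]; abel
      have key : ⁅x, y⁆ = (lam * mu) • ⁅x, y⁆ := by
        conv_lhs => rw [← hJ x y, hJx, hJy]
        simp [lie_add, add_lie, lie_smul, smul_lie, e1, e2, e3, smul_smul, mul_comm]
      have : (1 - lam * mu) • ⁅x, y⁆ = 0 := by
        rw [sub_smul, one_smul, ← key, sub_self]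
      rcases smul_eq_zero.mp this with h | h
      · exact absurd (sub_eq_zero.mp h).symm hlm
      · exact h

theorem genEigenspaces_commute {k L : Type*} [Field k] [IsAlgClosed k] [CharZero k]
    [LieRing L] [LieAlgebra k L] [FiniteDimensional k L]
    (J : L →ₗ[k] L) (hJ : ∀ x y : L, ⁅J x, J y⁆ = ⁅x, y⁆)
    (lam mu : k) (hlm : lam * mu ≠ 1) (x y : L)
    (hx : x ∈ Module.End.maxGenEigenspace (J : Module.End k L) lam)
    (hy : y ∈ Module.End.maxGenEigenspace (J : Module.End k L) mu) :
    ⁅x, y⁆ = 0 := by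
  rw [Module.End.mem_maxGenEigenspace] at hx hy
  obtain ⟨n, hn⟩ := hx
  obtain ⟨m, hm⟩ := hy
  exact aux_key J hJ lam mu hlm (n + m) n m x y le_rfl hn hm
end

section
/- Let J be a Lie-orthogonal operator which is also an automorphism of a Lie algebra L. Then J acts as the identity on the derived algebra [L, L], and [Jz − z, [x, y]] = 0 for all x, y, z ∈ L; i.e., the image of J − Id commutes with [L, L]. -/
theorem lieOrthogonal_automorphism_props {k L : Type*} [Field k] [LieRing L] [LieAlgebra k L]
    (J : L →ₗ[k] L) (hbij : Function.Bijective J)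
    (hauto : ∀ x y : L, J ⁅x, y⁆ = ⁅J x, J y⁆)
    (horth : ∀ x y : L, ⁅J x, J y⁆ = ⁅x, y⁆) :
    (∀ x y : L, J ⁅x, y⁆ = ⁅x, y⁆) ∧ (∀ x y z : L, ⁅J z - z, ⁅x, y⁆⁆ = 0) := by
  have h1 : ∀ x y : L, J ⁅x, y⁆ = ⁅x, y⁆ := fun x y => (hauto x y).trans (horth x y)
  refine ⟨h1, fun x y z => ?_⟩
  have : ⁅J z, ⁅x, y⁆⁆ = ⁅z, ⁅x, y⁆⁆ := by
    conv_lhs => rw [← h1 x y]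
    exact horth z _
  rw [sub_lie, this, sub_self]
end
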